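/- Let P be an irreducible stochastic n×n matrix and let 𝟏 ∈ ℝⁿ be the all-ones vector. Then the matrix A := I − P + 𝟏𝟏ᵀ is invertible, and the unique stationary row vector π of P (satisfying πP = π and π𝟏 = 1) is given by π = 𝟏ᵀ A⁻¹. -/

import Mathlib

/-!
If `A x = 0` then `P x = x + s 𝟏` with `s = ∑ x`. Since `P x` is a convex average of the entries
of `x`, evaluating at an index where `x` is maximal gives `s ≤ 0`, and at one where it is minimal
`s ≥ 0`. Hence `P x = x`, so `x` is constant by irreducibility, and the constant vanishes because
`∑ x = 0`; thus `A` is invertible. A stationary `π` satisfies `π A = π - π P + (π 𝟏) 𝟏ᵀ = 𝟏ᵀ`,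
which gives `π = 𝟏ᵀ A⁻¹`.
-/

open Matrix

namespace Matrix

variable {ι R : Type*} [Fintype ι]

section AllOnes

variable [NonAssocSemiring R]

lemma of_one_mulVec (x : ι → R) : (of fun _ _ : ι => (1 : R)) *ᵥ x = fun _ => ∑ j, x j := by
  ext i
  simp [mulVec, dotProduct]

lemma vecMul_of_one (π : ι → R) : π ᵥ* (of fun _ _ : ι => (1 : R)) = fun _ => ∑ i, π i := by
  ext j
  simp [vecMul, dotProduct]

end AllOnes

variable [DecidableEq ι]

lemma mulVec_apply_le_of_mem_rowStochastic [Semiring R] [PartialOrder R] [IsOrderedRing R]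
    {P : Matrix ι ι R} (hP : P ∈ rowStochastic R ι) {x : ι → R} {c : R}
    (hx : ∀ j, x j ≤ c) (i : ι) : (P *ᵥ x) i ≤ c :=
  calc (P *ᵥ x) i = ∑ j, P i j * x j := rfl
    _ ≤ ∑ j, P i j * c :=
      Finset.sum_le_sum fun j _ => mul_le_mul_of_nonneg_left (hx j) (nonneg_of_mem_rowStochastic hP)
    _ = c := by rw [← Finset.sum_mul, sum_row_of_mem_rowStochastic hP, one_mul]

section Averaging

variable [CommRing R] [LinearOrder R] [IsStrictOrderedRing R] {P : Matrix ι ι R}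

lemma nonpos_of_mulVec_eq_add_const [Nonempty ι] (hP : P ∈ rowStochastic R ι) {x : ι → R}
    {s : R} (hx : P *ᵥ x = x + fun _ => s) : s ≤ 0 := by
  obtain ⟨i, hi⟩ := Finite.exists_max x
  have := mulVec_apply_le_of_mem_rowStochastic hP hi i
  rw [hx, Pi.add_apply] at this
  linarith

lemma eq_zero_of_mulVec_eq_add_const [Nonempty ι] (hP : P ∈ rowStochastic R ι) {x : ι → R}
    {s : R} (hx : P *ᵥ x = x + fun _ => s) : s = 0 := by
  have hneg : P *ᵥ -x = -x + fun _ => -s := by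
    rw [mulVec_neg, hx, neg_add]
    rfl
  linarith [nonpos_of_mulVec_eq_add_const hP hx, nonpos_of_mulVec_eq_add_const hP hneg]

end Averaging

section Fundamental

variable [CommRing R] {P : Matrix ι ι R}

def fundamentalMatrix (P : Matrix ι ι R) : Matrix ι ι R := 1 - P + of fun _ _ => 1

lemma mulVec_eq_add_sum_of_fundamentalMatrix_mulVec_eq_zero {x : ι → R}
    (hx : fundamentalMatrix P *ᵥ x = 0) : P *ᵥ x = x + fun _ => ∑ j, x j := by
  rw [fundamentalMatrix, add_mulVec, sub_mulVec, one_mulVec, of_one_mulVec] at hx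
  rw [← sub_eq_zero, ← neg_eq_zero, ← hx]
  abel

variable [LinearOrder R] [IsStrictOrderedRing R]

lemma eq_zero_of_fundamentalMatrix_mulVec_eq_zero (hP : P ∈ rowStochastic R ι)
    (hirr : {x : ι → R | P *ᵥ x = x} = (Submodule.span R {(fun _ => 1 : ι → R)} : Set (ι → R)))
    {x : ι → R} (hx : fundamentalMatrix P *ᵥ x = 0) : x = 0 := by
  cases isEmpty_or_nonempty ι
  · exact Subsingleton.elim _ _
  have hPx := mulVec_eq_add_sum_of_fundamentalMatrix_mulVec_eq_zero hx
  have hsum : ∑ j, x j = 0 := eq_zero_of_mulVec_eq_add_const hP hPx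
  have hfix : P *ᵥ x = x := by
    rw [hPx, hsum]
    exact add_zero x
  have hconst : x ∈ Submodule.span R {(fun _ => 1 : ι → R)} := by
    rw [← SetLike.mem_coe, ← hirr]
    exact hfix
  obtain ⟨c, rfl⟩ := Submodule.mem_span_singleton.1 hconst
  have hc : (Fintype.card ι : R) * c = 0 := by simpa using hsum
  have hcard : (Fintype.card ι : R) ≠ 0 := Nat.cast_ne_zero.2 Fintype.card_ne_zero
  simp [(mul_eq_zero.1 hc).resolve_left hcard]

end Fundamental

lemma isUnit_fundamentalMatrix [Field R] [LinearOrder R] [IsStrictOrderedRing R]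
    {P : Matrix ι ι R} (hP : P ∈ rowStochastic R ι)
    (hirr : {x : ι → R | P *ᵥ x = x} = (Submodule.span R {(fun _ => 1 : ι → R)} : Set (ι → R))) :
    IsUnit (fundamentalMatrix P) :=
  mulVec_injective_iff_isUnit.1 <| (injective_iff_map_eq_zero (fundamentalMatrix P).mulVecLin).2
    fun _ => eq_zero_of_fundamentalMatrix_mulVec_eq_zero hP hirr

lemma eq_one_vecMul_fundamentalMatrix_inv [CommRing R] {P : Matrix ι ι R}
    (hA : IsUnit (fundamentalMatrix P)) {π : ι → R} (hπP : π ᵥ* P = π) (hπ : ∑ i, π i = 1) :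
    π = 1 ᵥ* (fundamentalMatrix P)⁻¹ := by
  have hπA : π ᵥ* fundamentalMatrix P = 1 := by
    rw [fundamentalMatrix, vecMul_add, vecMul_sub, vecMul_one, hπP, vecMul_of_one, hπ, sub_self,
      zero_add]
    rfl
  rw [← hπA, vecMul_vecMul, mul_nonsing_inv _ ((isUnit_iff_isUnit_det _).1 hA), vecMul_one]

end Matrix

/-- Stationary row vector of an irreducible stochastic matrix via the
fundamental matrix `A = I - P + 𝟏𝟏ᵀ`. -/
theorem stationary_vector_formula {n : ℕ} (P : Matrix (Fin n) (Fin n) ℝ)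
    (hnonneg : ∀ i j, 0 ≤ P i j) (hrow : ∀ i, ∑ j, P i j = 1)
    (hirr : {x : Fin n → ℝ | P.mulVec x = x} =
      (Submodule.span ℝ {(fun _ => 1 : Fin n → ℝ)} : Submodule ℝ (Fin n → ℝ)))
    (A : Matrix (Fin n) (Fin n) ℝ)
    (hA : A = 1 - P + Matrix.of (fun _ _ => (1 : ℝ))) :
    IsUnit A ∧
      ∀ π : Fin n → ℝ, (∀ i, 0 ≤ π i) → π ᵥ* P = π → (∑ i, π i) = 1 →
        π = (fun _ => (1 : ℝ)) ᵥ* A⁻¹ := by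
  have hP : P ∈ rowStochastic ℝ (Fin n) := mem_rowStochastic_iff_sum.2 ⟨hnonneg, hrow⟩
  have hAunit : IsUnit (fundamentalMatrix P) := isUnit_fundamentalMatrix hP hirr
  rw [show A = fundamentalMatrix P from hA]
  exact ⟨hAunit, fun π _ hπP hπ => eq_one_vecMul_fundamentalMatrix_inv hAunit hπP hπ⟩
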